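/- For any two policies π and π' of the fixed finite discounted MDP, the discounted state visitation distributions satisfy ∑_s |d^π(s) − d^{π'}(s)| ≤ (2γ/(1−γ)) D^π_TV(π, π'). -/

import Mathlib

open Finset

/-- Time-`t` state distribution of policy `π` in the MDP with transitions `P`
and initial distribution `μ`. -/
noncomputable def pDist {S A : Type*} [Fintype S] [Fintype A]
    (P : S → A → S → ℝ) (μ : S → ℝ) (π : S → A → ℝ) : ℕ → S → ℝ
  | 0 => μ
  | t + 1 => fun s' => ∑ s, ∑ a, pDist P μ π t s * π s a * P s a s'

/-- Discounted state visitation distribution `d^π`. -/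
noncomputable def dvisit {S A : Type*} [Fintype S] [Fintype A]
    (P : S → A → S → ℝ) (μ : S → ℝ) (γ : ℝ) (π : S → A → ℝ) (s : S) : ℝ :=
  (1 - γ) * ∑' t : ℕ, γ ^ t * pDist P μ π t s

/-- Discounted return `J_R(π)`. -/
noncomputable def Jret {S A : Type*} [Fintype S] [Fintype A]
    (P : S → A → S → ℝ) (μ : S → ℝ) (γ : ℝ) (R : S → A → ℝ) (π : S → A → ℝ) : ℝ :=
  ∑' t : ℕ, γ ^ t * ∑ s, ∑ a, pDist P μ π t s * π s a * R s a

/-- Advantage function `A_R^π(s,a) = Q_R^π(s,a) - V_R^π(s)`, expressed in terms of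
the value function `V` of the policy. -/
noncomputable def Adv {S A : Type*} [Fintype S]
    (P : S → A → S → ℝ) (γ : ℝ) (R : S → A → ℝ) (V : S → ℝ) (s : S) (a : A) : ℝ :=
  (R s a + γ * ∑ s', P s a s' * V s') - V s

/-- KL divergence between two distributions on a finite type. -/
noncomputable def KL {X : Type*} [Fintype X] (p q : X → ℝ) : ℝ :=
  ∑ x, p x * Real.log (p x / q x)

/-- Total variation distance between two distributions on a finite type. -/
noncomputable def TV {X : Type*} [Fintype X] (p q : X → ℝ) : ℝ :=
  (1 / 2) * ∑ x, |p x - q x|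

/-! Write `δ t = ∑ s, |p_t^π s - p_t^π' s|`. A step of the chain applies the policy and then
the stochastic kernel `P`, which is a contraction in `ℓ¹`; exchanging `π'` for `π` on top of that
costs at most `2 ∑ s, p_t^π s * TV (π s) (π' s) = 2 ε t`. Hence `δ (t + 1) ≤ δ t + 2 ε t` with
`δ 0 = 0`, and weighting by `γ ^ t` gives `(1 - γ) ∑ γ ^ t δ t ≤ 2 γ ∑ γ ^ t ε t`: the left side
bounds `∑ s, |d^π s - d^π' s|` and the right side is `2 γ ∑ s, d^π s * TV (π s) (π' s)`. -/

section Transition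

variable {S A : Type*} [Fintype S] [Fintype A] {P : S → A → S → ℝ}

theorem sum_abs_sum_sum_mul_le (hP0 : ∀ s a s', 0 ≤ P s a s') (hP1 : ∀ s a, ∑ s', P s a s' = 1)
    (f : S → A → ℝ) : ∑ s', |∑ s, ∑ a, f s a * P s a s'| ≤ ∑ s, ∑ a, |f s a| :=
  calc ∑ s', |∑ s, ∑ a, f s a * P s a s'|
      ≤ ∑ s', ∑ s, ∑ a, |f s a| * P s a s' := by
        gcongr with s'
        refine (abs_sum_le_sum_abs _ _).trans (sum_le_sum fun s _ => ?_)
        refine (abs_sum_le_sum_abs _ _).trans_eq (sum_congr rfl fun a _ => ?_)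
        rw [abs_mul, abs_of_nonneg (hP0 s a s')]
    _ = ∑ s, ∑ a, |f s a| := by
        rw [sum_comm]
        refine sum_congr rfl fun s _ => ?_
        rw [sum_comm]
        simp only [← mul_sum, hP1, mul_one]

theorem sum_abs_sub_transition_le (hP0 : ∀ s a s', 0 ≤ P s a s')
    (hP1 : ∀ s a, ∑ s', P s a s' = 1) {π π' : S → A → ℝ} (hπ'0 : ∀ s a, 0 ≤ π' s a)
    (hπ'1 : ∀ s, ∑ a, π' s a = 1) {p q : S → ℝ} (hp : ∀ s, 0 ≤ p s) :
    ∑ s', |∑ s, ∑ a, p s * π s a * P s a s' - ∑ s, ∑ a, q s * π' s a * P s a s'| ≤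
      ∑ s, |p s - q s| + 2 * ∑ s, p s * TV (π s) (π' s) :=
  calc ∑ s', |∑ s, ∑ a, p s * π s a * P s a s' - ∑ s, ∑ a, q s * π' s a * P s a s'|
      = ∑ s', |∑ s, ∑ a, (p s * π s a - q s * π' s a) * P s a s'| := by
        simp only [← sum_sub_distrib, sub_mul]
    _ ≤ ∑ s, ∑ a, |p s * π s a - q s * π' s a| := sum_abs_sum_sum_mul_le hP0 hP1 _
    _ ≤ ∑ s, ∑ a, (p s * |π s a - π' s a| + |p s - q s| * π' s a) := by
        gcongr with s _ a _
        calc |p s * π s a - q s * π' s a|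
            = |p s * (π s a - π' s a) + (p s - q s) * π' s a| := by congr 1; ring
          _ ≤ _ := by
            grw [abs_add_le, abs_mul, abs_mul, abs_of_nonneg (hp s), abs_of_nonneg (hπ'0 s a)]
    _ = ∑ s, |p s - q s| + 2 * ∑ s, p s * TV (π s) (π' s) := by
        simp only [sum_add_distrib, ← mul_sum, hπ'1, mul_one, TV]
        rw [add_comm, mul_sum]
        congr 1
        exact sum_congr rfl fun s _ => by ring

end Transition

section StateDistribution

variable {S A : Type*} [Fintype S] [Fintype A] {P : S → A → S → ℝ} {μ : S → ℝ}
  {π : S → A → ℝ}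

theorem pDist_nonneg (hP0 : ∀ s a s', 0 ≤ P s a s') (hμ0 : ∀ s, 0 ≤ μ s)
    (hπ0 : ∀ s a, 0 ≤ π s a) (t : ℕ) (s : S) : 0 ≤ pDist P μ π t s := by
  induction t generalizing s with
  | zero => exact hμ0 s
  | succ t ih =>
    exact sum_nonneg fun s _ => sum_nonneg fun a _ =>
      mul_nonneg (mul_nonneg (ih s) (hπ0 s a)) (hP0 s a _)

theorem sum_pDist (hP1 : ∀ s a, ∑ s', P s a s' = 1) (hπ1 : ∀ s, ∑ a, π s a = 1) (t : ℕ) :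
    ∑ s, pDist P μ π t s = ∑ s, μ s := by
  induction t with
  | zero => rfl
  | succ t ih =>
    calc ∑ s', ∑ s, ∑ a, pDist P μ π t s * π s a * P s a s'
        = ∑ s, ∑ a, pDist P μ π t s * π s a * ∑ s', P s a s' := by
          rw [sum_comm]
          exact sum_congr rfl fun s _ => by rw [sum_comm]; simp only [mul_sum]
      _ = ∑ s, μ s := by simp only [hP1, mul_one, ← mul_sum, hπ1, ih]

theorem pDist_le_sum (hP0 : ∀ s a s', 0 ≤ P s a s') (hP1 : ∀ s a, ∑ s', P s a s' = 1)
    (hμ0 : ∀ s, 0 ≤ μ s) (hπ0 : ∀ s a, 0 ≤ π s a) (hπ1 : ∀ s, ∑ a, π s a = 1) (t : ℕ) (s : S) :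
    pDist P μ π t s ≤ ∑ s, μ s :=
  sum_pDist (μ := μ) hP1 hπ1 t ▸
    single_le_sum (fun s _ => pDist_nonneg hP0 hμ0 hπ0 t s) (mem_univ s)

theorem summable_pow_mul_pDist (hP0 : ∀ s a s', 0 ≤ P s a s') (hP1 : ∀ s a, ∑ s', P s a s' = 1)
    (hμ0 : ∀ s, 0 ≤ μ s) (hπ0 : ∀ s a, 0 ≤ π s a) (hπ1 : ∀ s, ∑ a, π s a = 1) {γ : ℝ}
    (hγ0 : 0 ≤ γ) (hγ1 : γ < 1) (s : S) : Summable fun t => γ ^ t * pDist P μ π t s :=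
  ((summable_geometric_of_lt_one hγ0 hγ1).mul_right (∑ s, μ s)).of_nonneg_of_le
    (fun t => mul_nonneg (pow_nonneg hγ0 t) (pDist_nonneg hP0 hμ0 hπ0 t s))
    (fun t => mul_le_mul_of_nonneg_left (pDist_le_sum hP0 hP1 hμ0 hπ0 hπ1 t s) (pow_nonneg hγ0 t))

end StateDistribution

theorem one_sub_mul_tsum_le_of_le_succ {γ : ℝ} (hγ : 0 ≤ γ) {δ ε : ℕ → ℝ} (hδ0 : δ 0 = 0)
    (hδ : ∀ t, δ (t + 1) ≤ δ t + ε t) (hδs : Summable fun t => γ ^ t * δ t)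
    (hεs : Summable fun t => γ ^ t * ε t) :
    (1 - γ) * ∑' t, γ ^ t * δ t ≤ γ * ∑' t, γ ^ t * ε t := by
  have h : ∑' t, γ ^ t * δ t ≤ γ * ∑' t, γ ^ t * δ t + γ * ∑' t, γ ^ t * ε t :=
    calc ∑' t, γ ^ t * δ t = ∑' t, γ ^ (t + 1) * δ (t + 1) := by
          rw [hδs.tsum_eq_zero_add, hδ0, mul_zero, zero_add]
      _ ≤ ∑' t, (γ * (γ ^ t * δ t) + γ * (γ ^ t * ε t)) := by
          refine ((summable_nat_add_iff 1).2 hδs).tsum_le_tsum (fun t => ?_)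
            ((hδs.mul_left γ).add (hεs.mul_left γ))
          calc γ ^ (t + 1) * δ (t + 1) ≤ γ ^ (t + 1) * (δ t + ε t) := by gcongr; exact hδ t
            _ = γ * (γ ^ t * δ t) + γ * (γ ^ t * ε t) := by ring
      _ = γ * ∑' t, γ ^ t * δ t + γ * ∑' t, γ ^ t * ε t := by
          rw [(hδs.mul_left γ).tsum_add (hεs.mul_left γ), tsum_mul_left, tsum_mul_left]
  linarith

theorem sum_abs_tsum_le {ι : Type*} [Fintype ι] {f : ℕ → ι → ℝ}
    (hf : ∀ i, Summable fun t => f t i) : ∑ i, |∑' t, f t i| ≤ ∑' t, ∑ i, |f t i| := by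
  rw [Summable.tsum_finsetSum fun i _ => (hf i).abs]
  gcongr with i
  have h := norm_tsum_le_tsum_norm (f := fun t => f t i)
    (by simpa only [Real.norm_eq_abs] using (hf i).abs)
  simpa only [Real.norm_eq_abs] using h

section Visitation

variable {S A : Type*} [Fintype S] [Fintype A] {P : S → A → S → ℝ} {μ : S → ℝ}
  {π π' : S → A → ℝ} {γ : ℝ}

theorem dvisit_sub_dvisit {s : S} (hp : Summable fun t => γ ^ t * pDist P μ π t s)
    (hq : Summable fun t => γ ^ t * pDist P μ π' t s) :
    dvisit P μ γ π s - dvisit P μ γ π' s =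
      (1 - γ) * ∑' t, γ ^ t * (pDist P μ π t s - pDist P μ π' t s) := by
  rw [dvisit, dvisit, ← mul_sub, ← hp.tsum_sub hq]
  simp only [mul_sub]

theorem sum_abs_dvisit_sub_le (hγ0 : 0 ≤ γ) (hγ1 : γ ≤ 1)
    (hp : ∀ s, Summable fun t => γ ^ t * pDist P μ π t s)
    (hq : ∀ s, Summable fun t => γ ^ t * pDist P μ π' t s) :
    ∑ s, |dvisit P μ γ π s - dvisit P μ γ π' s| ≤
      (1 - γ) * ∑' t, γ ^ t * ∑ s, |pDist P μ π t s - pDist P μ π' t s| := by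
  simp only [dvisit_sub_dvisit (hp _) (hq _), abs_mul, abs_of_nonneg (sub_nonneg.2 hγ1),
    ← mul_sum]
  gcongr
  calc _ ≤ _ := sum_abs_tsum_le fun s => by simpa only [mul_sub] using (hp s).sub (hq s)
    _ = _ := by simp only [abs_mul, abs_pow, abs_of_nonneg hγ0, mul_sum]

theorem sum_dvisit_mul (hp : ∀ s, Summable fun t => γ ^ t * pDist P μ π t s) (w : S → ℝ) :
    ∑ s, dvisit P μ γ π s * w s = (1 - γ) * ∑' t, γ ^ t * ∑ s, pDist P μ π t s * w s := by
  simp only [dvisit, mul_assoc, ← tsum_mul_right, ← mul_sum]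
  rw [← Summable.tsum_finsetSum fun s _ => by simpa only [mul_assoc] using (hp s).mul_right (w s)]
  simp only [mul_sum]

end Visitation

theorem stmt_2_general {S A : Type*} [Fintype S] [Fintype A]
    (P : S → A → S → ℝ)
    (hP0 : ∀ s a s', 0 ≤ P s a s') (hP1 : ∀ s a, ∑ s', P s a s' = 1)
    (γ : ℝ) (hγ0 : 0 < γ) (hγ1 : γ < 1)
    (μ : S → ℝ) (hμ0 : ∀ s, 0 ≤ μ s)
    (π π' : S → A → ℝ)
    (hπ0 : ∀ s a, 0 ≤ π s a) (hπ1 : ∀ s, ∑ a, π s a = 1)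
    (hπ'0 : ∀ s a, 0 ≤ π' s a) (hπ'1 : ∀ s, ∑ a, π' s a = 1) :
    ∑ s, |dvisit P μ γ π s - dvisit P μ γ π' s| ≤
      (2 * γ / (1 - γ)) * ∑ s, dvisit P μ γ π s * TV (π s) (π' s) := by
  set δ : ℕ → ℝ := fun t => ∑ s, |pDist P μ π t s - pDist P μ π' t s|
  set ε : ℕ → ℝ := fun t => ∑ s, pDist P μ π t s * TV (π s) (π' s)
  have hp := summable_pow_mul_pDist hP0 hP1 hμ0 hπ0 hπ1 hγ0.le hγ1
  have hq := summable_pow_mul_pDist hP0 hP1 hμ0 hπ'0 hπ'1 hγ0.le hγ1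
  have hδs : Summable fun t => γ ^ t * δ t :=
    (summable_sum (s := univ) fun s _ => ((hp s).sub (hq s)).abs).congr fun t => by
      simp only [δ, mul_sum, ← mul_sub, abs_mul, abs_pow, abs_of_pos hγ0]
  have hεs : Summable fun t => γ ^ t * (2 * ε t) :=
    (summable_sum (s := univ) fun s _ => (hp s).mul_right (2 * TV (π s) (π' s))).congr
      fun t => by simp only [ε, mul_sum, mul_assoc, mul_left_comm]
  have hstep (t : ℕ) : δ (t + 1) ≤ δ t + 2 * ε t :=
    sum_abs_sub_transition_le hP0 hP1 hπ'0 hπ'1 (pDist_nonneg hP0 hμ0 hπ0 t)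
  calc _ ≤ (1 - γ) * ∑' t, γ ^ t * δ t := sum_abs_dvisit_sub_le hγ0.le hγ1.le hp hq
    _ ≤ γ * ∑' t, γ ^ t * (2 * ε t) :=
      one_sub_mul_tsum_le_of_le_succ hγ0.le (by simp [δ, pDist]) hstep hδs hεs
    _ = 2 * γ / (1 - γ) * ((1 - γ) * ∑' t, γ ^ t * ε t) := by
      simp only [mul_left_comm _ (2 : ℝ), tsum_mul_left]
      field_simp [(sub_pos.2 hγ1).ne']
    _ = _ := by rw [sum_dvisit_mul hp]

/-- For any two policies `π` and `π'`, the discounted state visitation distributions satisfy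
`∑_s |d^π(s) − d^{π'}(s)| ≤ (2γ/(1−γ)) D^π_TV(π, π')`. -/
theorem stmt_2 {S A : Type*} [Fintype S] [Fintype A] [Nonempty S] [Nonempty A]
    (P : S → A → S → ℝ)
    (hP0 : ∀ s a s', 0 ≤ P s a s') (hP1 : ∀ s a, ∑ s', P s a s' = 1)
    (γ : ℝ) (hγ0 : 0 < γ) (hγ1 : γ < 1)
    (μ : S → ℝ) (hμ0 : ∀ s, 0 ≤ μ s) (hμ1 : ∑ s, μ s = 1)
    (π π' : S → A → ℝ)
    (hπ0 : ∀ s a, 0 ≤ π s a) (hπ1 : ∀ s, ∑ a, π s a = 1)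
    (hπ'0 : ∀ s a, 0 ≤ π' s a) (hπ'1 : ∀ s, ∑ a, π' s a = 1) :
    ∑ s, |dvisit P μ γ π s - dvisit P μ γ π' s| ≤
      (2 * γ / (1 - γ)) * ∑ s, dvisit P μ γ π s * TV (π s) (π' s) :=
  stmt_2_general P hP0 hP1 γ hγ0 hγ1 μ hμ0 π π' hπ0 hπ1 hπ'0 hπ'1
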